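/- arXiv:1801.06696 — 2 statements merged into one kernel-verified Lean document; each statement's English description precedes it below -/
import Mathlib

section
/- Let 𝒳 be a topological space such that there exists a sequence (h_m)_{m≥1} of continuous functions h_m : 𝒳 → ℝ that separates points of 𝒳, and let 𝒮 denote the σ-algebra on 𝒳 generated by the maps (h_m)_{m≥1}. Then every Borel subset of a σ-compact subset of 𝒳 belongs to 𝒮; that is, if K = ⋃_{n≥1} K_n with each K_n compact, then every Borel set B ⊆ K satisfies B ∈ 𝒮. -/
open MeasureTheory

/-- If a sequence of continuous real-valued functions separates points of `𝒳` and `𝒮`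
is the σ-algebra generated by these maps, then every Borel subset of a σ-compact subset
of `𝒳` belongs to `𝒮`. -/
theorem borel_subset_sigmaCompact_mem_generated
    {𝒳 : Type*} [TopologicalSpace 𝒳]
    (h : ℕ → 𝒳 → ℝ)
    (hcont : ∀ m, Continuous (h m))
    (hsep : ∀ x y : 𝒳, x ≠ y → ∃ m, h m x ≠ h m y)
    (𝒮 : MeasurableSpace 𝒳)
    (h𝒮 : 𝒮 = ⨆ m : ℕ, MeasurableSpace.comap (h m) (borel ℝ))
    (K : ℕ → Set 𝒳) (hK : ∀ n, IsCompact (K n))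
    (B : Set 𝒳) (hBK : B ⊆ ⋃ n, K n)
    (hB : MeasurableSet[borel 𝒳] B) :
    MeasurableSet[𝒮] B := by
  classical
  set H : 𝒳 → (ℕ → ℝ) := fun x m => h m x with hH
  have Hcont : Continuous H := continuous_pi fun m => hcont m
  have Hinj : Function.Injective H := by
    intro x y hxy
    by_contra hne
    obtain ⟨m, hm⟩ := hsep x y hne
    exact hm (congrFun hxy m)
  -- 𝒳 is Hausdorff
  haveI : T2Space 𝒳 := ⟨by
    intro x y hne
    obtain ⟨m, hm⟩ := hsep x y hne
    obtain ⟨u, v, hu, hv, hxu, hyv, huv⟩ := t2_separation hm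
    exact ⟨(h m) ⁻¹' u, (h m) ⁻¹' v, (hcont m).isOpen_preimage u hu,
      (hcont m).isOpen_preimage v hv, hxu, hyv,
      huv.preimage (h m)⟩⟩
  -- 𝒮 is the comap of H of the Borel σ-algebra on ℕ → ℝ
  have h𝒮' : 𝒮 = MeasurableSpace.comap H (borel (ℕ → ℝ)) := by
    rw [h𝒮, ← BorelSpace.measurable_eq (α := ℕ → ℝ)]
    show _ = MeasurableSpace.comap H MeasurableSpace.pi
    rw [MeasurableSpace.pi, MeasurableSpace.comap_iSup]
    congr 1
    funext m
    rw [MeasurableSpace.comap_comp, BorelSpace.measurable_eq (α := ℝ)]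
    rfl
  letI : MeasurableSpace 𝒳 := borel 𝒳
  haveI : BorelSpace 𝒳 := ⟨rfl⟩
  -- each piece B ∩ K n is in 𝒮
  have key : ∀ n, MeasurableSet[𝒮] (B ∩ K n) := by
    intro n
    -- restriction of H to K n is a measurable embedding
    set e : K n → (ℕ → ℝ) := fun x => H x with he
    have hecont : Continuous e := Hcont.comp continuous_subtype_val
    have heinj : Function.Injective e := fun a b hab =>
      Subtype.ext (Hinj hab)
    haveI : CompactSpace (K n) := isCompact_iff_compactSpace.mp (hK n)
    have hce := hecont.isClosedEmbedding heinj
    have hme : MeasurableEmbedding e := hce.measurableEmbedding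
    have hBsub : MeasurableSet ((Subtype.val : K n → 𝒳) ⁻¹' B) :=
      measurable_subtype_coe hB
    have himg : MeasurableSet (e '' ((Subtype.val : K n → 𝒳) ⁻¹' B)) :=
      hme.measurableSet_image' hBsub
    have hpre : B ∩ K n = H ⁻¹' (e '' ((Subtype.val : K n → 𝒳) ⁻¹' B)) := by
      ext x
      constructor
      · rintro ⟨hxB, hxK⟩
        exact ⟨⟨x, hxK⟩, hxB, rfl⟩
      · rintro ⟨⟨y, hyK⟩, hyB, hxy⟩
        have : y = x := Hinj hxy
        subst this
        exact ⟨hyB, hyK⟩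
    rw [h𝒮', hpre]
    exact ⟨_, (BorelSpace.measurable_eq (α := ℕ → ℝ)) ▸ himg, rfl⟩
  have : B = ⋃ n, B ∩ K n := by
    ext x
    simp only [Set.mem_iUnion, Set.mem_inter_iff]
    constructor
    · intro hx
      obtain ⟨n, hn⟩ := Set.mem_iUnion.mp (hBK hx)
      exact ⟨n, hx, hn⟩
    · rintro ⟨n, hx, -⟩
      exact hx
  rw [this]
  exact MeasurableSet.iUnion key
end

section
/- Let 𝒳 be a topological space such that there exists a sequence (h_m)_{m≥1} of continuous functions h_m : 𝒳 → ℝ that separates points of 𝒳, and let 𝒮 denote the σ-algebra on 𝒳 generated by the maps (h_m)_{m≥1}. Then every probability measure μ on (𝒳, 𝒮) that is supported by a σ-compact set (i.e., there exists a σ-compact K ⊆ 𝒳 with K ∈ 𝒮 and μ(K) = 1) admits a unique extension to a measure on the Borel σ-algebra of 𝒳 that is a Radon measure (inner regular with respect to compact sets). -/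
/-!
The functions `h m` combine into a continuous injection `H : 𝒳 → ℕ → ℝ` with `𝒮 = H⁻¹(Borel)`.
Hence every compact set lies in `𝒮`, and a Radon extension, being determined by its values on
compact sets, is determined by `μ`. For existence, pull the image measure `H_* μ` back along `H`.
On each compact `K n` the map `H` is a closed embedding, so `H` maps Borel subsets of `⋃ n, K n` to
Borel sets, and `H_* μ` is carried by `H '' ⋃ n, K n`; this makes the pullback a measure extending
`μ`. It is inner regular because `H_* μ`, a finite measure on a Polish space, is: a compact
`C ⊆ H '' (B ∩ (K 0 ∪ ⋯ ∪ K n))` pulls back to the compact `(K 0 ∪ ⋯ ∪ K n) ∩ H⁻¹ C ⊆ B`.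
-/

open MeasureTheory Set Function Topology

theorem MeasurableSpace.comap_pi_eq_iSup {X ι : Type*} {β : ι → Type*}
    [m : ∀ i, MeasurableSpace (β i)] (f : X → ∀ i, β i) :
    MeasurableSpace.comap f MeasurableSpace.pi = ⨆ i, (m i).comap fun x => f x i := by
  simp only [MeasurableSpace.pi, MeasurableSpace.comap_iSup, MeasurableSpace.comap_comp]
  rfl

section InnerRegular

variable {X : Type*} [TopologicalSpace X] [MeasurableSpace X]

theorem MeasurableSet.measure_eq_iSup_isCompact_and_subset {B : Set X} (hB : MeasurableSet B)
    (ν : Measure X) [ν.InnerRegular] :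
    ν B = ⨆ (K : Set X) (_ : IsCompact K ∧ K ⊆ B), ν K := by
  rw [hB.measure_eq_iSup_isCompact]
  simp_rw [iSup_and]
  exact iSup_congr fun K => iSup_comm

theorem MeasureTheory.Measure.ext_of_eq_iSup_isCompact {ν₁ ν₂ : Measure X}
    (h₁ : ∀ B, MeasurableSet B → ν₁ B = ⨆ (K : Set X) (_ : IsCompact K ∧ K ⊆ B), ν₁ K)
    (h₂ : ∀ B, MeasurableSet B → ν₂ B = ⨆ (K : Set X) (_ : IsCompact K ∧ K ⊆ B), ν₂ K)
    (h : ∀ K, IsCompact K → ν₁ K = ν₂ K) : ν₁ = ν₂ :=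
  Measure.ext fun B hB => by
    rw [h₁ B hB, h₂ B hB]
    exact iSup_congr fun K => iSup_congr fun hK => h K hK.1

end InnerRegular

section ContinuousInjection

variable {X Y : Type*} [TopologicalSpace X] [TopologicalSpace Y] [T2Space Y] {H : X → Y}

theorem IsCompact.measurableSet_comap [MeasurableSpace Y] [OpensMeasurableSpace Y]
    (hH : Continuous H) (hinj : Injective H) {K : Set X} (hK : IsCompact K) :
    MeasurableSet[MeasurableSpace.comap H ‹_›] K :=
  ⟨H '' K, (hK.image hH).isClosed.measurableSet, hinj.preimage_image K⟩

variable [MeasurableSpace X] [BorelSpace X] [MeasurableSpace Y] [BorelSpace Y]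

theorem IsCompact.measurableSet_image_inter {K : Set X} (hK : IsCompact K) (hH : Continuous H)
    (hinj : InjOn H K) {B : Set X} (hB : MeasurableSet B) : MeasurableSet (H '' (K ∩ B)) := by
  have := isCompact_iff_compactSpace.mp hK
  have hemb : IsClosedEmbedding (K.domRestrict H) :=
    (hH.comp continuous_subtype_val).isClosedEmbedding hinj.injective
  rw [← Subtype.image_preimage_coe, ← image_comp]
  exact hemb.measurableEmbedding.measurableSet_image' (measurable_subtype_coe hB)

variable {K : ℕ → Set X}

theorem measurableSet_image_iUnion_inter (hK : ∀ n, IsCompact (K n)) (hH : Continuous H)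
    (hinj : Injective H) {B : Set X} (hB : MeasurableSet B) :
    MeasurableSet (H '' ((⋃ n, K n) ∩ B)) := by
  rw [iUnion_inter, image_iUnion]
  exact .iUnion fun n => (hK n).measurableSet_image_inter hH hinj.injOn hB

variable {μ : Measure Y}

theorem nullMeasurableSet_image_of_conull_image_iUnion (hK : ∀ n, IsCompact (K n))
    (hH : Continuous H) (hinj : Injective H) (hμ : μ (H '' ⋃ n, K n)ᶜ = 0) {B : Set X}
    (hB : MeasurableSet B) : NullMeasurableSet (H '' B) μ := by
  refine (measurableSet_image_iUnion_inter hK hH hinj hB).nullMeasurableSet.congr ?_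
  rw [image_inter hinj]
  exact inter_ae_eq_right_of_ae_eq_univ (ae_eq_univ.2 hμ)

theorem comap_preimage_of_conull_image_iUnion (hK : ∀ n, IsCompact (K n)) (hH : Continuous H)
    (hinj : Injective H) (hμ : μ (H '' ⋃ n, K n)ᶜ = 0) {S : Set Y} (hS : MeasurableSet S) :
    μ.comap H (H ⁻¹' S) = μ S := by
  rw [Measure.comap_preimage _ _ hinj hH.measurable
    (fun _ => nullMeasurableSet_image_of_conull_image_iUnion hK hH hinj hμ) hS]
  exact measure_inter_conull (measure_mono_null (compl_subset_compl.2 (image_subset_range _ _)) hμ)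

theorem innerRegular_comap_of_conull_image_iUnion [μ.InnerRegular] (hK : ∀ n, IsCompact (K n))
    (hH : Continuous H) (hinj : Injective H) (hμ : μ (H '' ⋃ n, K n)ᶜ = 0) :
    (μ.comap H).InnerRegular := by
  refine ⟨fun B hB r hr => ?_⟩
  have hle : μ.comap H B ≤ ⨆ n, μ (H '' (accumulate K n ∩ B)) := calc
    μ.comap H B ≤ μ (H '' B) := Measure.comap_apply_le _ _ hB.nullMeasurableSet
    _ = μ (H '' B ∩ H '' ⋃ n, K n) := (measure_inter_conull hμ).symm
    _ = μ (⋃ n, H '' (accumulate K n ∩ B)) := by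
      rw [← image_inter hinj, inter_comm, ← iUnion_accumulate, iUnion_inter, image_iUnion]
    _ = ⨆ n, μ (H '' (accumulate K n ∩ B)) :=
      Monotone.measure_iUnion fun m n hmn =>
        image_mono (inter_subset_inter_left _ (monotone_accumulate hmn))
  obtain ⟨n, hn⟩ := lt_iSup_iff.1 (hr.trans_le hle)
  have hKn := isCompact_accumulate hK n
  obtain ⟨C, hCB, hC, hrC⟩ :=
    (hKn.measurableSet_image_inter hH hinj.injOn hB).exists_lt_isCompact hn
  refine ⟨accumulate K n ∩ H ⁻¹' C, ?_, hKn.inter_right (hC.isClosed.preimage hH), ?_⟩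
  · rintro x ⟨-, hxC⟩
    obtain ⟨x', ⟨-, hx'B⟩, hx'⟩ := hCB hxC
    exact hinj hx' ▸ hx'B
  · calc r < μ C := hrC
      _ ≤ μ (H '' (accumulate K n ∩ H ⁻¹' C)) := by
        rw [image_inter_preimage]
        exact measure_mono (subset_inter (hCB.trans (image_mono inter_subset_left)) subset_rfl)
      _ ≤ μ.comap H _ := Measure.le_comap_apply _ _ hinj
        (fun _ => nullMeasurableSet_image_of_conull_image_iUnion hK hH hinj hμ) _

end ContinuousInjection

theorem unique_radon_extension_of_separating_general
    {𝒳 : Type*} [TopologicalSpace 𝒳]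
    (h : ℕ → 𝒳 → ℝ)
    (hcont : ∀ m, Continuous (h m))
    (hsep : ∀ x y : 𝒳, x ≠ y → ∃ m, h m x ≠ h m y)
    (𝒮 : MeasurableSpace 𝒳)
    (h𝒮 : 𝒮 = ⨆ m : ℕ, MeasurableSpace.comap (h m) (borel ℝ))
    (μ : @Measure 𝒳 𝒮) (hμ : @IsProbabilityMeasure 𝒳 𝒮 μ)
    (K : ℕ → Set 𝒳) (hK : ∀ n, IsCompact (K n))
    (hKfull : μ (⋃ n, K n) = 1) :
    ∃! ν : @Measure 𝒳 (borel 𝒳),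
      (∀ A : Set 𝒳, MeasurableSet[𝒮] A → ν A = μ A) ∧
      (∀ B : Set 𝒳, MeasurableSet[borel 𝒳] B →
        ν B = ⨆ (K' : Set 𝒳) (_ : IsCompact K' ∧ K' ⊆ B), ν K') := by
  set H : 𝒳 → ℕ → ℝ := fun x m => h m x
  have hH : Continuous H := continuous_pi hcont
  have hinj : Injective H := fun x y hxy =>
    by_contra fun hne => (hsep x y hne).elim fun m hm => hm (congrFun hxy m)
  replace h𝒮 : 𝒮 = MeasurableSpace.comap H MeasurableSpace.pi :=
    h𝒮.trans (MeasurableSpace.comap_pi_eq_iSup H).symm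
  have hHμ : Measurable H := h𝒮 ▸ comap_measurable H
  have := hμ
  set μ' := μ.map H
  have : IsProbabilityMeasure μ' := Measure.isProbabilityMeasure_map hHμ.aemeasurable
  have hKH : MeasurableSet (H '' ⋃ n, K n) := by
    rw [image_iUnion]
    exact .iUnion fun n => ((hK n).image hH).isClosed.measurableSet
  have hμ'K : μ' (H '' ⋃ n, K n)ᶜ = 0 := by
    rw [prob_compl_eq_zero_iff hKH, Measure.map_apply hHμ hKH, hinj.preimage_image, hKfull]
  let _ : MeasurableSpace 𝒳 := borel 𝒳
  have _ : BorelSpace 𝒳 := ⟨rfl⟩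
  have := innerRegular_comap_of_conull_image_iUnion hK hH hinj hμ'K
  have hinner : ∀ B, MeasurableSet[borel 𝒳] B → μ'.comap H B = _ := fun B hB =>
    hB.measure_eq_iSup_isCompact_and_subset (μ'.comap H)
  have hext : ∀ A, MeasurableSet[𝒮] A → μ'.comap H A = μ A := by
    intro A hA
    rw [h𝒮] at hA
    obtain ⟨S, hS, rfl⟩ := hA
    rw [comap_preimage_of_conull_image_iUnion hK hH hinj hμ'K hS, Measure.map_apply hHμ hS]
  have hcompact : ∀ C, IsCompact C → MeasurableSet[𝒮] C := fun C hC =>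
    h𝒮 ▸ hC.measurableSet_comap hH hinj
  refine ⟨μ'.comap H, ⟨hext, hinner⟩, fun ν ⟨hνμ, hν⟩ => ?_⟩
  refine Measure.ext_of_eq_iSup_isCompact hν hinner fun C hC => ?_
  rw [hνμ C (hcompact C hC), hext C (hcompact C hC)]

/-- Every probability measure on the σ-algebra generated by a separating sequence of
continuous real-valued functions that is supported by a σ-compact set has a unique
Radon extension to the Borel σ-algebra. -/
theorem unique_radon_extension_of_separating
    {𝒳 : Type*} [TopologicalSpace 𝒳]
    (h : ℕ → 𝒳 → ℝ)
    (hcont : ∀ m, Continuous (h m))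
    (hsep : ∀ x y : 𝒳, x ≠ y → ∃ m, h m x ≠ h m y)
    (𝒮 : MeasurableSpace 𝒳)
    (h𝒮 : 𝒮 = ⨆ m : ℕ, MeasurableSpace.comap (h m) (borel ℝ))
    (μ : @Measure 𝒳 𝒮) (hμ : @IsProbabilityMeasure 𝒳 𝒮 μ)
    (K : ℕ → Set 𝒳) (hK : ∀ n, IsCompact (K n))
    (hKmeas : MeasurableSet[𝒮] (⋃ n, K n))
    (hKfull : μ (⋃ n, K n) = 1) :
    ∃! ν : @Measure 𝒳 (borel 𝒳),
      (∀ A : Set 𝒳, MeasurableSet[𝒮] A → ν A = μ A) ∧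
      (∀ B : Set 𝒳, MeasurableSet[borel 𝒳] B →
        ν B = ⨆ (K' : Set 𝒳) (_ : IsCompact K' ∧ K' ⊆ B), ν K') :=
  unique_radon_extension_of_separating_general h hcont hsep 𝒮 h𝒮 μ hμ K hK hKfull
end
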